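/- Let α be a real number with α ∉ ℤ, let X be c₀(Δ^(α)) or ℓ∞(Δ^(α)), and let Y be any of c₀, c, ℓ∞ (the spaces of null, convergent, and bounded real sequences with the supremum norm). If the infinite matrix A = (a_{nk}) maps X into Y (each row of A lies in the β-dual of X and Ax ∈ Y for all x ∈ X), then the operator norm of the induced bounded linear operator L_A : X → Y, L_A(x) = Ax, equals sup_n ∑_{k=0}^∞ |â_{nk}|, where â_{nk} = ∑_{j=k}^∞ (−1)^{j−k} Γ(−α+1)/((j−k)!·Γ(−α−j+k+1)) a_{nj}. -/

import Mathlib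

open Filter Finset Topology ZeroAtInfty BoundedContinuousFunction

/-- The fractional difference matrix `Δ^(α)`. -/
noncomputable def fracDelta (α : ℝ) (n k : ℕ) : ℝ :=
  if k ≤ n then
    (-1 : ℝ) ^ (n - k) * Real.Gamma (α + 1) /
      ((Nat.factorial (n - k) : ℝ) * Real.Gamma (α - n + k + 1))
  else 0

/-- `(Δ^(α)x)_n = ∑_{k=0}^n Δ^(α)_{nk} x_k`. -/
noncomputable def fracDeltaSeq (α : ℝ) (x : ℕ → ℝ) (n : ℕ) : ℝ :=
  ∑ k ∈ Finset.range (n + 1), fracDelta α n k * x k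

/-- Membership in `c₀(Δ^(α))`. -/
def memC0Delta (α : ℝ) (x : ℕ → ℝ) : Prop :=
  Tendsto (fracDeltaSeq α x) atTop (nhds 0)

/-- Membership in `ℓ∞(Δ^(α))`. -/
def memLinfDelta (α : ℝ) (x : ℕ → ℝ) : Prop :=
  ∃ C : ℝ, ∀ n, |fracDeltaSeq α x n| ≤ C

/-- The norm `‖x‖ = sup_n |(Δ^(α)x)_n|`. -/
noncomputable def deltaNorm (α : ℝ) (x : ℕ → ℝ) : ℝ :=
  ⨆ n, |fracDeltaSeq α x n|

/-- Classical convergence of the series `∑_{j=0}^∞ f j` to `L`. -/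
def SeriesHasSum (f : ℕ → ℝ) (L : ℝ) : Prop :=
  Tendsto (fun m => ∑ j ∈ Finset.range m, f j) atTop (nhds L)

/-- `(Ax)_n = ∑_k a_{nk} x_k` (the limit of the partial sums, when it exists). -/
noncomputable def matMul (a : ℕ → ℕ → ℝ) (x : ℕ → ℝ) (n : ℕ) : ℝ :=
  limUnder atTop (fun m => ∑ k ∈ Finset.range m, a n k * x k)

section Alg
variable {α : ℝ} (hα : ∀ m : ℤ, α ≠ (m : ℝ))
include hα

lemma notInt_sub_nat (m : ℕ) : ∀ j : ℕ, α - m ≠ -(j:ℝ) := by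
  intro j h
  exact hα ((m : ℤ) - j) (by push_cast; linarith)

lemma notInt_sub_nat' (m : ℕ) : α - m ≠ 0 := by
  intro h; exact hα (m : ℤ) (by push_cast; linarith)

lemma gamma_shift_ne (m : ℕ) : Real.Gamma (α - m + 1) ≠ 0 := by
  apply Real.Gamma_ne_zero
  intro j h
  exact notInt_sub_nat hα m (j + 1) (by push_cast at h ⊢; linarith)

lemma gamma_prod (m : ℕ) :
    Real.Gamma (α + 1) = (∏ i ∈ range m, (α - i)) * Real.Gamma (α - m + 1) := by
  induction m with
  | zero => simp
  | succ n ih =>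
    rw [ih, prod_range_succ]
    have h1 : α - n ≠ 0 := notInt_sub_nat' hα n
    have : Real.Gamma (α - n + 1) = (α - n) * Real.Gamma (α - n) := Real.Gamma_add_one h1
    rw [this]
    have : (α - (n+1:ℕ) + 1) = α - n := by push_cast; ring
    rw [this]; ring

omit hα in
lemma descPoch_smeval_prod (β : ℝ) (m : ℕ) :
    (descPochhammer ℤ m).smeval β = ∏ i ∈ range m, (β - i) := by
  induction m with
  | zero => simp [descPochhammer_zero, Polynomial.smeval_one]
  | succ n ih =>
    rw [descPochhammer_succ_right, Polynomial.smeval_mul, ih, prod_range_succ,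
      Polynomial.smeval_sub, Polynomial.smeval_X, Polynomial.smeval_natCast]
    norm_num

omit hα in
lemma ring_choose_eq (β : ℝ) (m : ℕ) :
    Ring.choose β m = (∏ i ∈ range m, (β - i)) / m.factorial := by
  have h := Ring.descPochhammer_eq_factorial_smul_choose β m
  rw [descPoch_smeval_prod] at h
  rw [h, nsmul_eq_mul]
  field_simp

lemma fracDelta_eq_choose {n k : ℕ} (hkn : k ≤ n) :
    fracDelta α n k = (-1 : ℝ) ^ (n - k) * Ring.choose α (n - k) := by
  rw [fracDelta, if_pos hkn]
  set m := n - k with hm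
  have hc : α - n + k + 1 = α - (m : ℕ) + 1 := by
    rw [hm, Nat.cast_sub hkn]; ring
  rw [hc, gamma_prod hα m, ring_choose_eq]
  have h2 := gamma_shift_ne hα m
  have h3 : (Nat.factorial m : ℝ) ≠ 0 := by positivity
  field_simp

omit hα in
lemma ring_choose_zero' (m : ℕ) : Ring.choose (0:ℝ) m = if m = 0 then 1 else 0 := by
  cases m with
  | zero => simp
  | succ n => simp [Ring.choose_zero_succ]

lemma hα_neg : ∀ m : ℤ, -α ≠ (m : ℝ) := fun m h => hα (-m) (by push_cast; linarith)

lemma fracDelta_inv_sum {n k : ℕ} (hkn : k ≤ n) :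
    ∑ j ∈ Finset.Icc k n, fracDelta α n j * fracDelta (-α) j k = if n = k then 1 else 0 := by
  have hneg := hα_neg hα
  have key : ∀ j ∈ Finset.Icc k n, fracDelta α n j * fracDelta (-α) j k
      = (-1:ℝ)^(n-k) * (Ring.choose α (n-j) * Ring.choose (-α) (j-k)) := by
    intro j hj
    simp only [Finset.mem_Icc] at hj
    rw [fracDelta_eq_choose hα hj.2, fracDelta_eq_choose hneg hj.1, mul_mul_mul_comm,
      ← pow_add]
    congr 2
    omega
  rw [Finset.sum_congr rfl key, ← Finset.mul_sum]
  have hbij : ∑ j ∈ Finset.Icc k n, Ring.choose α (n-j) * Ring.choose (-α) (j-k)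
      = ∑ ij ∈ antidiagonal (n-k), Ring.choose α ij.1 * Ring.choose (-α) ij.2 := by
    apply Finset.sum_nbij' (i := fun j => (n - j, j - k)) (j := fun ij => k + ij.2)
    · intro j hj; simp only [Finset.mem_Icc] at hj; simp only [Finset.HasAntidiagonal.mem_antidiagonal]; omega
    · intro ij hij; simp only [Finset.HasAntidiagonal.mem_antidiagonal] at hij; simp only [Finset.mem_Icc]; omega
    · intro j hj; simp only [Finset.mem_Icc] at hj; omega
    · intro ij hij; simp only [Finset.HasAntidiagonal.mem_antidiagonal] at hij
      ext <;> simp <;> omega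
    · intro j hj; rfl
  rw [hbij, ← Ring.add_choose_eq (n-k) (Commute.all α (-α))]
  have h0 : α + -α = 0 := by ring
  rw [h0, ring_choose_zero']
  by_cases h : n = k
  · simp [h]
  · have : n - k ≠ 0 := by omega
    simp [h, this]

omit hα in
lemma sum_swap_tri (n : ℕ) (f : ℕ → ℕ → ℝ) :
    ∑ j ∈ range (n+1), ∑ k ∈ range (j+1), f j k
      = ∑ k ∈ range (n+1), ∑ j ∈ Finset.Icc k n, f j k := by
  apply Finset.sum_comm'
  intro j k
  simp only [Finset.mem_range, Finset.mem_Icc]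
  omega

lemma fracDelta_invol (y : ℕ → ℝ) (n : ℕ) :
    fracDeltaSeq α (fracDeltaSeq (-α) y) n = y n := by
  unfold fracDeltaSeq
  have : ∀ j ∈ range (n+1), fracDelta α n j * ∑ k ∈ range (j+1), fracDelta (-α) j k * y k
      = ∑ k ∈ range (j+1), fracDelta α n j * (fracDelta (-α) j k * y k) := by
    intro j _; rw [Finset.mul_sum]
  rw [Finset.sum_congr rfl this, sum_swap_tri]
  have : ∀ k ∈ range (n+1), ∑ j ∈ Finset.Icc k n, fracDelta α n j * (fracDelta (-α) j k * y k)
      = (if n = k then 1 else 0) * y k := by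
    intro k hk
    simp only [Finset.mem_range] at hk
    rw [← fracDelta_inv_sum hα (by omega : k ≤ n), Finset.sum_mul]
    apply Finset.sum_congr rfl
    intro j _
    ring
  rw [Finset.sum_congr rfl this]
  simp [ite_mul]

end Alg


noncomputable def hatPart (α : ℝ) (a : ℕ → ℕ → ℝ) (n m j : ℕ) : ℝ :=
  ∑ k ∈ Finset.Ico j m, fracDelta (-α) k j * a n k

lemma abel_identity (α : ℝ) (a : ℕ → ℕ → ℝ) (y : ℕ → ℝ) (n m : ℕ) :
    ∑ k ∈ range m, a n k * fracDeltaSeq (-α) y k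
      = ∑ j ∈ range m, hatPart α a n m j * y j := by
  unfold fracDeltaSeq hatPart
  have h1 : ∀ k ∈ range m, a n k * ∑ j ∈ range (k+1), fracDelta (-α) k j * y j
      = ∑ j ∈ range (k+1), a n k * (fracDelta (-α) k j * y j) := by
    intro k _; rw [Finset.mul_sum]
  rw [Finset.sum_congr rfl h1]
  rw [Finset.sum_comm' (s' := fun j => Finset.Ico j m) (t' := range m)
    (by intro k j; simp only [Finset.mem_range, Finset.mem_Ico]; omega)]
  apply Finset.sum_congr rfl
  intro j _
  rw [Finset.sum_mul]
  apply Finset.sum_congr rfl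
  intro k _
  ring

lemma hat_tendsto (α : ℝ) (a : ℕ → ℕ → ℝ) (Ahat : ℕ → ℕ → ℝ)
    (h : ∀ n k, SeriesHasSum (fun j => fracDelta (-α) (k + j) k * a n (k + j)) (Ahat n k))
    (n j : ℕ) : Tendsto (fun m => hatPart α a n m j) atTop (𝓝 (Ahat n j)) := by
  have h2 : ∀ M : ℕ, hatPart α a n (M + j) j
      = ∑ i ∈ range M, fracDelta (-α) (j + i) j * a n (j + i) := by
    intro M
    rw [hatPart, Finset.sum_Ico_eq_sum_range]
    simp only [Nat.add_sub_cancel_left, Nat.add_sub_cancel]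
  rw [← tendsto_add_atTop_iff_nat j]
  have := h n j
  unfold SeriesHasSum at this
  convert this using 1
  funext M
  exact h2 M

section C0

noncomputable def mkC0 (y : ℕ → ℝ) (h : Tendsto y atTop (𝓝 0)) : C₀(ℕ, ℝ) :=
  ⟨⟨y, continuous_of_discreteTopology⟩, by rwa [cocompact_eq_atTop]⟩

@[simp] lemma mkC0_apply (y : ℕ → ℝ) (h : Tendsto y atTop (𝓝 0)) (n : ℕ) :
    (mkC0 y h) n = y n := rfl

lemma c0_abs_le_norm (f : C₀(ℕ, ℝ)) (n : ℕ) : |f n| ≤ ‖f‖ := by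
  calc |f n| = ‖f.toBCF n‖ := rfl
  _ ≤ ‖f.toBCF‖ := BoundedContinuousFunction.norm_coe_le_norm _ _
  _ = ‖f‖ := ZeroAtInftyContinuousMap.norm_toBCF_eq_norm

lemma c0_norm_le (f : C₀(ℕ, ℝ)) (C : ℝ) (hC : 0 ≤ C) (h : ∀ n, |f n| ≤ C) : ‖f‖ ≤ C := by
  rw [← ZeroAtInftyContinuousMap.norm_toBCF_eq_norm]
  exact (BoundedContinuousFunction.norm_le hC).mpr h

noncomputable def finCLM (c : ℕ → ℝ) (M : ℕ) : C₀(ℕ, ℝ) →L[ℝ] ℝ :=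
  LinearMap.mkContinuous
    { toFun := fun y => ∑ j ∈ range M, c j * y j
      map_add' := by
        intro y z
        simp only [ZeroAtInftyContinuousMap.coe_add, Pi.add_apply, mul_add]
        rw [Finset.sum_add_distrib]
      map_smul' := by
        intro r y
        simp only [ZeroAtInftyContinuousMap.coe_smul, Pi.smul_apply, smul_eq_mul,
          RingHom.id_apply]
        rw [Finset.mul_sum]
        apply Finset.sum_congr rfl
        intro j _; ring }
    (∑ j ∈ range M, |c j|)
    (by
      intro y
      simp only [LinearMap.coe_mk, AddHom.coe_mk, Real.norm_eq_abs]
      calc |∑ j ∈ range M, c j * y j| ≤ ∑ j ∈ range M, |c j * y j| :=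
            Finset.abs_sum_le_sum_abs _ _
      _ ≤ ∑ j ∈ range M, |c j| * ‖y‖ := by
            apply Finset.sum_le_sum
            intro j _
            rw [abs_mul]
            exact mul_le_mul_of_nonneg_left (c0_abs_le_norm y j) (abs_nonneg _)
      _ = (∑ j ∈ range M, |c j|) * ‖y‖ := by rw [Finset.sum_mul])

@[simp] lemma finCLM_apply (c : ℕ → ℝ) (M : ℕ) (y : C₀(ℕ, ℝ)) :
    finCLM c M y = ∑ j ∈ range M, c j * y j := rfl

lemma finCLM_norm_le (c : ℕ → ℝ) (M : ℕ) : ‖finCLM c M‖ ≤ ∑ j ∈ range M, |c j| :=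
  LinearMap.mkContinuous_norm_le _ (Finset.sum_nonneg fun _ _ => abs_nonneg _) _

noncomputable def tsumCLM (c : ℕ → ℝ) (h : Summable fun j => |c j|) : C₀(ℕ, ℝ) →L[ℝ] ℝ :=
  LinearMap.mkContinuous
    { toFun := fun y => ∑' j, c j * y j
      map_add' := by
        intro y z
        have hs : ∀ w : C₀(ℕ, ℝ), Summable fun j => c j * w j := by
          intro w
          apply Summable.of_abs
          apply Summable.of_nonneg_of_le (fun j => abs_nonneg _) _ (h.mul_right ‖w‖)
          intro j
          rw [abs_mul]
          exact mul_le_mul_of_nonneg_left (c0_abs_le_norm w j) (abs_nonneg _)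
        simp only [ZeroAtInftyContinuousMap.coe_add, Pi.add_apply, mul_add]
        exact Summable.tsum_add (hs y) (hs z)
      map_smul' := by
        intro r y
        simp only [ZeroAtInftyContinuousMap.coe_smul, Pi.smul_apply, smul_eq_mul,
          RingHom.id_apply]
        rw [← tsum_mul_left]
        apply tsum_congr
        intro j; ring }
    (∑' j, |c j|)
    (by
      intro y
      simp only [LinearMap.coe_mk, AddHom.coe_mk, Real.norm_eq_abs]
      have hs : Summable fun j => |c j * y j| := by
        apply Summable.of_nonneg_of_le (fun j => abs_nonneg _) _ (h.mul_right ‖y‖)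
        intro j
        rw [abs_mul]
        exact mul_le_mul_of_nonneg_left (c0_abs_le_norm y j) (abs_nonneg _)
      calc |∑' j, c j * y j| ≤ ∑' j, |c j * y j| := by
            exact norm_tsum_le_tsum_norm (f := fun j => c j * y j) hs
      _ ≤ ∑' j, |c j| * ‖y‖ := by
            apply Summable.tsum_le_tsum _ hs (h.mul_right ‖y‖)
            intro j
            rw [abs_mul]
            exact mul_le_mul_of_nonneg_left (c0_abs_le_norm y j) (abs_nonneg _)
      _ = (∑' j, |c j|) * ‖y‖ := tsum_mul_right)

@[simp] lemma tsumCLM_apply (c : ℕ → ℝ) (h : Summable fun j => |c j|) (y : C₀(ℕ, ℝ)) :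
    tsumCLM c h y = ∑' j, c j * y j := rfl

lemma tsumCLM_norm_le (c : ℕ → ℝ) (h : Summable fun j => |c j|) :
    ‖tsumCLM c h‖ ≤ ∑' j, |c j| :=
  LinearMap.mkContinuous_norm_le _ (tsum_nonneg fun _ => abs_nonneg _) _

end C0

noncomputable def sgnf (t : ℝ) : ℝ := if t = 0 then 0 else |t| / t

lemma sgnf_abs_le_one (t : ℝ) : |sgnf t| ≤ 1 := by
  unfold sgnf
  split
  · simp
  · next h =>
      rw [abs_div, abs_abs, div_self (abs_ne_zero.mpr h)]

lemma mul_sgnf (t : ℝ) : t * sgnf t = |t| := by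
  unfold sgnf
  split
  · next h => simp [h]
  · next h => field_simp

noncomputable def sgnv (c : ℕ → ℝ) (M : ℕ) : ℕ → ℝ := fun j => if j < M then sgnf (c j) else 0

lemma sgnv_tendsto (c : ℕ → ℝ) (M : ℕ) : Tendsto (sgnv c M) atTop (𝓝 0) := by
  apply tendsto_const_nhds.congr' (EventuallyEq.symm _)
  rw [EventuallyEq, eventually_atTop]
  exact ⟨M, fun j hj => by simp [sgnv, Nat.not_lt.mpr hj]⟩

noncomputable def sgnC0 (c : ℕ → ℝ) (M : ℕ) : C₀(ℕ, ℝ) := mkC0 (sgnv c M) (sgnv_tendsto c M)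

lemma sgnC0_norm_le (c : ℕ → ℝ) (M : ℕ) : ‖sgnC0 c M‖ ≤ 1 := by
  apply c0_norm_le _ _ zero_le_one
  intro n
  show |sgnv c M n| ≤ 1
  unfold sgnv
  split
  · exact sgnf_abs_le_one _
  · simp

lemma sum_mul_sgnv (c d : ℕ → ℝ) {M m : ℕ} (h : M ≤ m) :
    ∑ j ∈ range m, d j * sgnv c M j = ∑ j ∈ range M, d j * sgnf (c j) := by
  rw [← Finset.sum_subset (Finset.range_subset_range.mpr h)
    (by intro j _ hj; simp only [Finset.mem_range, Nat.not_lt] at hj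
        simp [sgnv, Nat.not_lt.mpr hj])]
  apply Finset.sum_congr rfl
  intro j hj
  simp only [Finset.mem_range] at hj
  simp [sgnv, hj]

lemma finCLM_sgn (c : ℕ → ℝ) {M m : ℕ} (h : M ≤ m) :
    finCLM c m (sgnC0 c M) = ∑ j ∈ range M, |c j| := by
  rw [finCLM_apply]
  have : ∀ j, (sgnC0 c M) j = sgnv c M j := fun _ => rfl
  simp only [this]
  rw [sum_mul_sgnv c c h]
  exact Finset.sum_congr rfl fun j _ => mul_sgnf (c j)

lemma le_norm_finCLM (c : ℕ → ℝ) {M m : ℕ} (h : M ≤ m) :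
    ∑ j ∈ range M, |c j| ≤ ‖finCLM c m‖ := by
  have h1 := (finCLM c m).le_opNorm (sgnC0 c M)
  rw [finCLM_sgn c h] at h1
  refine le_trans (le_abs_self _) (le_trans h1 ?_)
  calc ‖finCLM c m‖ * ‖sgnC0 c M‖ ≤ ‖finCLM c m‖ * 1 :=
        mul_le_mul_of_nonneg_left (sgnC0_norm_le c M) (ContinuousLinearMap.opNorm_nonneg _)
  _ = ‖finCLM c m‖ := mul_one _

lemma tsumCLM_sgn (c : ℕ → ℝ) (h : Summable fun j => |c j|) (M : ℕ) :
    tsumCLM c h (sgnC0 c M) = ∑ j ∈ range M, |c j| := by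
  rw [tsumCLM_apply]
  have h0 : ∀ j, c j * (sgnC0 c M) j = if j ∈ range M then |c j| else 0 := by
    intro j
    by_cases hj : j < M
    · show c j * sgnv c M j = _
      simp [sgnv, hj, Finset.mem_range, mul_sgnf]
    · show c j * sgnv c M j = _
      simp [sgnv, hj, Finset.mem_range]
  calc ∑' j, c j * (sgnC0 c M) j = ∑ j ∈ range M, c j * (sgnC0 c M) j := by
        apply tsum_eq_sum
        intro j hj
        rw [h0 j, if_neg hj]
  _ = ∑ j ∈ range M, |c j| := by
        apply Finset.sum_congr rfl
        intro j hj
        rw [h0 j, if_pos hj]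

lemma le_norm_tsumCLM (c : ℕ → ℝ) (h : Summable fun j => |c j|) (M : ℕ) :
    ∑ j ∈ range M, |c j| ≤ ‖tsumCLM c h‖ := by
  have h1 := (tsumCLM c h).le_opNorm (sgnC0 c M)
  rw [tsumCLM_sgn c h] at h1
  refine le_trans (le_abs_self _) (le_trans h1 ?_)
  calc ‖tsumCLM c h‖ * ‖sgnC0 c M‖ ≤ ‖tsumCLM c h‖ * 1 :=
        mul_le_mul_of_nonneg_left (sgnC0_norm_le c M) (ContinuousLinearMap.opNorm_nonneg _)
  _ = ‖tsumCLM c h‖ := mul_one _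

lemma schur_glide (d : ℕ → ℕ → ℝ)
    (hcol : ∀ j, Tendsto (fun m => d m j) atTop (𝓝 0))
    (hconv : ∀ y : ℕ → ℝ, (∀ j, |y j| ≤ 1) →
      ∃ L, Tendsto (fun m => ∑ j ∈ range m, d m j * y j) atTop (𝓝 L)) :
    Tendsto (fun m => ∑ j ∈ range m, |d m j|) atTop (𝓝 0) := by
  set T : ℕ → ℝ := fun m => ∑ j ∈ range m, |d m j| with hTdef
  by_contra hT
  rw [Metric.tendsto_atTop] at hT
  push_neg at hT
  obtain ⟨δ, hδ, hfreq⟩ := hT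
  simp only [Real.dist_eq, sub_zero] at hfreq
  have hT0 : ∀ m, 0 ≤ T m := fun m => Finset.sum_nonneg fun _ _ => abs_nonneg _
  have hpre : ∀ P : ℕ, Tendsto (fun m => ∑ j ∈ range P, |d m j|) atTop (𝓝 0) := by
    intro P
    have h := tendsto_finset_sum (range P) (fun j _ => (hcol j).abs)
    simpa using h
  have hstep : ∀ p : ℕ, ∃ m, p < m ∧ δ ≤ T m ∧ ∑ j ∈ range p, |d m j| < δ/8 := by
    intro p
    have h8 : 0 < δ/8 := by linarith
    have hev := (hpre p).eventually (gt_mem_nhds h8)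
    rw [eventually_atTop] at hev
    obtain ⟨N, hN⟩ := hev
    obtain ⟨m, hm1, hm2⟩ := hfreq (max (p+1) N)
    refine ⟨m, ?_, ?_, ?_⟩
    · omega
    · have := abs_nonneg (T m); rw [abs_of_nonneg (hT0 m)] at hm2; linarith
    · exact hN m (le_trans (le_max_right _ _) hm1)
  choose ma hma1 hma2 hma3 using hstep
  set pf : ℕ → ℕ := fun i => Nat.rec 0 (fun _ q => ma q) i with hpf
  have pfS : ∀ i, pf (i+1) = ma (pf i) := fun i => rfl
  have pfmono : StrictMono pf := strictMono_nat_of_lt_succ fun i => by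
    rw [pfS]; exact hma1 _
  have hex : ∀ j : ℕ, ∃ i, j < pf (i+1) := fun j =>
    ⟨j, lt_of_lt_of_le (Nat.lt_succ_self j) (pfmono.le_apply)⟩
  set idx : ℕ → ℕ := fun j => Nat.find (hex j) with hidxdef
  have hidx1 : ∀ j, j < pf (idx j + 1) := fun j => Nat.find_spec (hex j)
  have hidx2 : ∀ j, pf (idx j) ≤ j := by
    intro j
    rcases Nat.eq_zero_or_pos (idx j) with h | h
    · rw [h]; exact Nat.zero_le j
    · obtain ⟨i, hi⟩ := Nat.exists_eq_add_of_le h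
      have := Nat.find_min (hex j) (m := idx j - 1) (by show idx j - 1 < idx j; omega)
      push_neg at this
      have h2 : idx j - 1 + 1 = idx j := by omega
      rwa [h2] at this
  have hidxu : ∀ i j, pf i ≤ j → j < pf (i+1) → idx j = i := by
    intro i j h1 h2
    have hle : idx j ≤ i := Nat.find_min' (hex j) h2
    rcases Nat.lt_or_ge (idx j) i with h | h
    · exfalso
      have : pf (idx j + 1) ≤ pf i := pfmono.monotone (show idx j + 1 ≤ i by omega)
      have := hidx1 j
      omega
    · omega
  set y : ℕ → ℝ := fun j => (-1 : ℝ)^(idx j) * sgnf (d (pf (idx j + 1)) j) with hy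
  have hyb : ∀ j, |y j| ≤ 1 := by
    intro j
    rw [hy]
    simp only [abs_mul, abs_pow, abs_neg, abs_one, one_pow, one_mul]
    exact sgnf_abs_le_one _
  obtain ⟨L, hL⟩ := hconv y hyb
  set S : ℕ → ℝ := fun m => ∑ j ∈ range m, d m j * y j with hS
  -- key estimate
  have hkey : ∀ i, δ/2 ≤ (-1:ℝ)^i * S (pf (i+1)) := by
    intro i
    set p := pf i with hp
    set m := pf (i+1) with hm
    have hpm : p ≤ m := le_of_lt (pfmono (Nat.lt_succ_self i))
    have hsplit : S m = ∑ j ∈ range p, d m j * y j + ∑ j ∈ Finset.Ico p m, d m j * y j := by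
      rw [hS]
      simp only
      rw [Finset.range_eq_Ico, ← Finset.sum_Ico_consecutive _ (Nat.zero_le p) hpm,
        ← Finset.range_eq_Ico]
    have hblock : ∀ j ∈ Finset.Ico p m, d m j * y j = (-1:ℝ)^i * |d m j| := by
      intro j hj
      simp only [Finset.mem_Ico] at hj
      have hidxj : idx j = i := hidxu i j hj.1 hj.2
      rw [hy]
      simp only [hidxj, ← hm]
      rw [mul_comm ((-1:ℝ)^i) _, ← mul_assoc, mul_sgnf]
      ring
    have hIco : ∑ j ∈ Finset.Ico p m, d m j * y j = (-1:ℝ)^i * (T m - ∑ j ∈ range p, |d m j|) := by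
      rw [Finset.sum_congr rfl hblock, ← Finset.mul_sum]
      congr 1
      rw [hTdef]
      simp only
      rw [Finset.range_eq_Ico, ← Finset.sum_Ico_consecutive _ (Nat.zero_le p) hpm,
        ← Finset.range_eq_Ico]
      ring
    have hTm : δ ≤ T m := by rw [hm, pfS]; exact hma2 _
    have hprefix : ∑ j ∈ range p, |d m j| < δ/8 := by rw [hm, pfS]; exact hma3 _
    have hpref2 : |∑ j ∈ range p, d m j * y j| ≤ ∑ j ∈ range p, |d m j| := by
      refine le_trans (Finset.abs_sum_le_sum_abs _ _) (Finset.sum_le_sum ?_)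
      intro j _
      rw [abs_mul]
      calc |d m j| * |y j| ≤ |d m j| * 1 := mul_le_mul_of_nonneg_left (hyb j) (abs_nonneg _)
      _ = |d m j| := mul_one _
    have hsign : ((-1:ℝ)^i) * ((-1:ℝ)^i) = 1 := by
      rw [← pow_add, show i + i = 2*i by omega, pow_mul]
      norm_num
    rw [hsplit, mul_add, hIco, ← mul_assoc, hsign, one_mul]
    have habs : |(-1:ℝ)^i * ∑ j ∈ range p, d m j * y j| ≤ ∑ j ∈ range p, |d m j| := by
      rw [abs_mul, abs_pow, abs_neg, abs_one, one_pow, one_mul]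
      exact hpref2
    have h1 : -(δ/8) ≤ (-1:ℝ)^i * ∑ j ∈ range p, d m j * y j := by
      have := neg_abs_le ((-1:ℝ)^i * ∑ j ∈ range p, d m j * y j)
      nlinarith [habs, hprefix]
    nlinarith [hTm, hprefix, h1]
  -- subsequence convergence
  have hmono2 : StrictMono (fun i => pf (i + 1)) := fun i j h => pfmono (show i+1 < j+1 by omega)
  have hsub : Tendsto (fun i => S (pf (i+1))) atTop (𝓝 L) :=
    hL.comp hmono2.tendsto_atTop
  rw [Metric.tendsto_atTop] at hsub
  obtain ⟨N, hN⟩ := hsub (δ/4) (by linarith)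
  have h1 := hN (2*N) (by omega)
  have h2 := hN (2*N+1) (by omega)
  rw [Real.dist_eq] at h1 h2
  have k1 := hkey (2*N)
  have k2 := hkey (2*N+1)
  have e1 : ((-1:ℝ))^(2*N) = 1 := by rw [pow_mul]; norm_num
  have e2 : ((-1:ℝ))^(2*N+1) = -1 := by rw [pow_succ, pow_mul]; norm_num
  rw [e1, one_mul] at k1
  rw [e2] at k2
  have a1 := abs_lt.mp h1
  have a2 := abs_lt.mp h2
  linarith

lemma bounded_of_tendsto {f : ℕ → ℝ} {L : ℝ} (h : Tendsto f atTop (𝓝 L)) :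
    ∃ C, ∀ n, |f n| ≤ C := by
  obtain ⟨C, hC⟩ := h.abs.bddAbove_range
  exact ⟨C, fun n => hC (Set.mem_range_self n)⟩

set_option maxHeartbeats 2000000 in
/-- If `A ∈ (X, Y)` for `X ∈ {c₀(Δ^(α)), ℓ∞(Δ^(α))}` and `Y ∈ {c₀, c, ℓ∞}`, then
`‖L_A‖ = sup_n ∑_k |â_{nk}|`. -/
theorem operatorNorm_into_linf (α : ℝ) (hα : ∀ m : ℤ, α ≠ (m : ℝ))
    (X : Set (ℕ → ℝ))
    (hX : X = {x | memC0Delta α x} ∨ X = {x | memLinfDelta α x})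
    (Y : Set (ℕ → ℝ))
    (hY : Y = {y | Tendsto y atTop (nhds 0)} ∨
          Y = {y | ∃ L : ℝ, Tendsto y atTop (nhds L)} ∨
          Y = {y | ∃ C : ℝ, ∀ n, |y n| ≤ C})
    (a : ℕ → ℕ → ℝ)
    (hrows : ∀ x ∈ X, ∀ n : ℕ, ∃ L : ℝ, SeriesHasSum (fun k => a n k * x k) L)
    (hmaps : ∀ x ∈ X, matMul a x ∈ Y)
    (Ahat : ℕ → ℕ → ℝ)
    (hAhat : ∀ n k, SeriesHasSum (fun j => fracDelta (-α) (k + j) k * a n (k + j)) (Ahat n k)) :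
    sSup {t : ℝ | ∃ x ∈ X, deltaNorm α x ≤ 1 ∧ t = ⨆ n, |matMul a x n|} =
      ⨆ n, ∑' k, |Ahat n k| := by
  classical
  have hneg : ∀ m : ℤ, -α ≠ (m : ℝ) := hα_neg hα
  have hinv1 : ∀ (y : ℕ → ℝ) (n : ℕ), fracDeltaSeq α (fracDeltaSeq (-α) y) n = y n :=
    fun y n => fracDelta_invol hα y n
  have hinv2 : ∀ (x : ℕ → ℝ) (n : ℕ), fracDeltaSeq (-α) (fracDeltaSeq α x) n = x n := by
    intro x n
    have h := fracDelta_invol hneg x n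
    rwa [neg_neg] at h
  -- membership of inverse-transformed null sequences
  have hmem0 : ∀ y : ℕ → ℝ, Tendsto y atTop (𝓝 0) → fracDeltaSeq (-α) y ∈ X := by
    intro y hy
    have hT : Tendsto (fracDeltaSeq α (fracDeltaSeq (-α) y)) atTop (𝓝 0) := by
      have : fracDeltaSeq α (fracDeltaSeq (-α) y) = y := funext (hinv1 y)
      rw [this]; exact hy
    rcases hX with h | h <;> rw [h]
    · exact hT
    · exact bounded_of_tendsto hT
  -- Y consists of bounded sequences
  have hYbd : ∀ f ∈ Y, ∃ C, ∀ n, |f n| ≤ C := by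
    intro f hf
    rcases hY with h | h | h
    · rw [h] at hf; exact bounded_of_tendsto hf
    · rw [h] at hf; obtain ⟨L, hL⟩ := hf; exact bounded_of_tendsto hL
    · rw [h] at hf; exact hf
  have hhat : ∀ n j, Tendsto (fun m => hatPart α a n m j) atTop (𝓝 (Ahat n j)) :=
    hat_tendsto α a Ahat hAhat
  -- convergence of the truncated functionals on c₀
  have hrowC0 : ∀ (y : C₀(ℕ, ℝ)) (n : ℕ),
      ∃ L, Tendsto (fun m => (finCLM (hatPart α a n m) m) y) atTop (𝓝 L) := by
    intro y n
    have hy0 : Tendsto ⇑y atTop (𝓝 0) := by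
      have := y.zero_at_infty'
      rwa [cocompact_eq_atTop] at this
    obtain ⟨L, hL⟩ := hrows _ (hmem0 ⇑y hy0) n
    refine ⟨L, ?_⟩
    unfold SeriesHasSum at hL
    have heq : ∀ m, (finCLM (hatPart α a n m) m) y
        = ∑ k ∈ range m, a n k * fracDeltaSeq (-α) ⇑y k := by
      intro m
      rw [finCLM_apply, ← abel_identity]
    rw [tendsto_congr heq]
    exact hL
  -- uniform bound on truncated functionals, per row
  have hFB : ∀ n, ∃ C, ∀ m, ‖finCLM (hatPart α a n m) m‖ ≤ C := by
    intro n
    apply banach_steinhaus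
    intro y
    obtain ⟨L, hL⟩ := hrowC0 y n
    obtain ⟨C, hC⟩ := bounded_of_tendsto hL
    exact ⟨C, fun m => by rw [Real.norm_eq_abs]; exact hC m⟩
  -- summability of hatted rows
  have hsummable : ∀ n, Summable fun j => |Ahat n j| := by
    intro n
    obtain ⟨C, hC⟩ := hFB n
    apply summable_of_sum_range_le (c := C) (fun j => abs_nonneg _)
    intro M
    have hlim : Tendsto (fun m => ∑ j ∈ range M, |hatPart α a n m j|) atTop
        (𝓝 (∑ j ∈ range M, |Ahat n j|)) := by
      apply tendsto_finset_sum
      intro j _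
      exact (hhat n j).abs
    apply le_of_tendsto hlim
    rw [eventually_atTop]
    exact ⟨M, fun m hm => le_trans (le_norm_finCLM _ hm) (hC m)⟩
  set G : ℕ → C₀(ℕ, ℝ) →L[ℝ] ℝ := fun n => tsumCLM (Ahat n) (hsummable n) with hG
  -- evaluation of limits on c₀
  have heval : ∀ (y : C₀(ℕ, ℝ)) (n : ℕ),
      Tendsto (fun m => (finCLM (hatPart α a n m) m) y) atTop (𝓝 (G n y)) := by
    intro y n
    obtain ⟨L, hL⟩ := hrowC0 y n
    obtain ⟨C, hC⟩ := hFB n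
    have hC0 : 0 ≤ C := le_trans (ContinuousLinearMap.opNorm_nonneg _) (hC 0)
    suffices h : G n y = L by rw [h]; exact hL
    apply eq_of_forall_dist_le
    intro ε hε
    set K := C + ‖G n‖ + 1 with hK
    have hKpos : 0 < K := by
      have := ContinuousLinearMap.opNorm_nonneg (G n)
      positivity
    set ε0 := ε / K with hε0
    have hε0pos : 0 < ε0 := div_pos hε hKpos
    -- truncation point
    have hy0 : Tendsto ⇑y atTop (𝓝 0) := by
      have := y.zero_at_infty'
      rwa [cocompact_eq_atTop] at this
    have hev := hy0.eventually (Metric.ball_mem_nhds (0:ℝ) hε0pos)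
    rw [eventually_atTop] at hev
    obtain ⟨M, hM⟩ := hev
    simp only [Metric.mem_ball, Real.dist_eq, sub_zero] at hM
    -- truncated vector
    have hy'0 : Tendsto (fun j => if j < M then y j else 0) atTop (𝓝 0) := by
      apply tendsto_const_nhds.congr' (EventuallyEq.symm _)
      rw [EventuallyEq, eventually_atTop]
      exact ⟨M, fun j hj => by simp [Nat.not_lt.mpr hj]⟩
    set y' : C₀(ℕ, ℝ) := mkC0 _ hy'0 with hy'
    have hdiff : ∀ j, |(y - y') j| ≤ ε0 := by
      intro j
      have : (y - y') j = y j - y' j := rfl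
      rw [this]
      show |y j - (if j < M then y j else 0)| ≤ ε0
      by_cases hj : j < M
      · simp [hj, le_of_lt hε0pos]
      · simp only [hj, if_false, sub_zero]
        exact le_of_lt (hM j (Nat.le_of_not_lt hj))
    have hnormdiff : ‖y - y'‖ ≤ ε0 := c0_norm_le _ _ (le_of_lt hε0pos) hdiff
    -- F_m y' converges to G n y'
    have hGy' : G n y' = ∑ j ∈ range M, Ahat n j * y j := by
      show tsumCLM (Ahat n) (hsummable n) y' = _
      rw [tsumCLM_apply]
      have h0 : ∀ j ∉ range M, Ahat n j * y' j = 0 := by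
        intro j hj
        simp only [Finset.mem_range, Nat.not_lt] at hj
        show Ahat n j * (if j < M then y j else 0) = 0
        simp [Nat.not_lt.mpr hj]
      rw [tsum_eq_sum h0]
      apply Finset.sum_congr rfl
      intro j hj
      simp only [Finset.mem_range] at hj
      show Ahat n j * (if j < M then y j else 0) = _
      simp [hj]
    have hFy' : Tendsto (fun m => (finCLM (hatPart α a n m) m) y') atTop (𝓝 (G n y')) := by
      rw [hGy']
      have hlim : Tendsto (fun m => ∑ j ∈ range M, hatPart α a n m j * y j) atTop
          (𝓝 (∑ j ∈ range M, Ahat n j * y j)) := by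
        apply tendsto_finset_sum
        intro j _
        exact (hhat n j).mul_const _
      apply hlim.congr'
      rw [EventuallyEq, eventually_atTop]
      refine ⟨M, fun m hm => ?_⟩
      rw [finCLM_apply]
      rw [← Finset.sum_subset (Finset.range_subset_range.mpr hm)]
      · apply Finset.sum_congr rfl
        intro j hj
        simp only [Finset.mem_range] at hj
        show hatPart α a n m j * y j = hatPart α a n m j * (if j < M then y j else 0)
        simp [hj]
      · intro j _ hj
        simp only [Finset.mem_range, Nat.not_lt] at hj
        show hatPart α a n m j * (if j < M then y j else 0) = 0
        simp [Nat.not_lt.mpr hj]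
    -- combine
    have hdistm : ∀ m, |(finCLM (hatPart α a n m) m) y - (finCLM (hatPart α a n m) m) y'| ≤ C * ε0 := by
      intro m
      have h1 : (finCLM (hatPart α a n m) m) y - (finCLM (hatPart α a n m) m) y'
          = (finCLM (hatPart α a n m) m) (y - y') := by rw [map_sub]
      rw [h1]
      calc |(finCLM (hatPart α a n m) m) (y - y')|
          ≤ ‖finCLM (hatPart α a n m) m‖ * ‖y - y'‖ :=
            (finCLM (hatPart α a n m) m).le_opNorm _
      _ ≤ C * ε0 := mul_le_mul (hC m) hnormdiff (norm_nonneg _) hC0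
    have hLdist : |L - G n y'| ≤ C * ε0 := by
      have hsub : Tendsto (fun m => (finCLM (hatPart α a n m) m) y
          - (finCLM (hatPart α a n m) m) y') atTop (𝓝 (L - G n y')) := hL.sub hFy'
      apply le_of_tendsto hsub.abs
      rw [eventually_atTop]
      exact ⟨0, fun m _ => hdistm m⟩
    have hGdist : |G n y - G n y'| ≤ ‖G n‖ * ε0 := by
      have h1 : G n y - G n y' = G n (y - y') := by rw [map_sub]
      rw [h1]
      calc |G n (y - y')| ≤ ‖G n‖ * ‖y - y'‖ := (G n).le_opNorm _
      _ ≤ ‖G n‖ * ε0 := mul_le_mul_of_nonneg_left hnormdiff (ContinuousLinearMap.opNorm_nonneg _)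
    rw [Real.dist_eq]
    have hKε : C * ε0 + ‖G n‖ * ε0 ≤ ε := by
      have : (C + ‖G n‖) * ε0 ≤ K * ε0 := by
        apply mul_le_mul_of_nonneg_right _ (le_of_lt hε0pos)
        rw [hK]; linarith
      have hKe : K * ε0 = ε := by
        rw [hε0]; field_simp
      nlinarith
    calc |G n y - L| ≤ |G n y - G n y'| + |G n y' - L| := abs_sub_le _ _ _
    _ ≤ ‖G n‖ * ε0 + C * ε0 := by
        have := abs_sub_comm (G n y') L
        refine add_le_add hGdist ?_
        rw [abs_sub_comm]
        exact hLdist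
    _ ≤ ε := by linarith
  -- matMul evaluated via G on c₀ vectors
  have hmat0 : ∀ (y : C₀(ℕ, ℝ)) (n : ℕ), matMul a (fracDeltaSeq (-α) ⇑y) n = G n y := by
    intro y n
    apply Tendsto.limUnder_eq
    have h1 := heval y n
    have h2 : ∀ m, (finCLM (hatPart α a n m) m) y
        = ∑ k ∈ range m, a n k * fracDeltaSeq (-α) ⇑y k := by
      intro m
      rw [finCLM_apply, ← abel_identity]
    rwa [tendsto_congr h2] at h1
  -- uniform bound over rows
  have hKex : ∃ K, ∀ n, ‖G n‖ ≤ K := by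
    apply banach_steinhaus
    intro y
    have hy0 : Tendsto ⇑y atTop (𝓝 0) := by
      have := y.zero_at_infty'
      rwa [cocompact_eq_atTop] at this
    obtain ⟨C, hC⟩ := hYbd _ (hmaps _ (hmem0 ⇑y hy0))
    refine ⟨C, fun n => ?_⟩
    rw [Real.norm_eq_abs, ← hmat0 y n]
    exact hC n
  obtain ⟨K, hK⟩ := hKex
  have hSrow_le : ∀ n, ∑' j, |Ahat n j| ≤ K := by
    intro n
    refine le_trans ?_ (hK n)
    apply Summable.tsum_le_of_sum_range_le (hsummable n)
    intro M
    exact le_norm_tsumCLM (Ahat n) (hsummable n) M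
  set S : ℝ := ⨆ n, ∑' j, |Ahat n j| with hSdef
  have hbddS : BddAbove (Set.range fun n => ∑' j, |Ahat n j|) := by
    refine ⟨K, ?_⟩
    rintro t ⟨n, rfl⟩
    exact hSrow_le n
  have hS0 : 0 ≤ S := le_trans (tsum_nonneg fun j => abs_nonneg _) (le_ciSup hbddS 0)
  have hSub : ∀ n, ∑' j, |Ahat n j| ≤ S := fun n => le_ciSup hbddS n
  -- upper bound for arbitrary unit vectors of X
  have hupper : ∀ x ∈ X, deltaNorm α x ≤ 1 → ∀ n, |matMul a x n| ≤ ∑' j, |Ahat n j| := by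
    intro x hx hxn n
    set y := fracDeltaSeq α x with hy
    have hxy : ∀ k, x k = fracDeltaSeq (-α) y k := fun k => (hinv2 x k).symm
    have hybdd : ∃ C, ∀ i, |y i| ≤ C := by
      rcases hX with h | h
      · rw [h] at hx
        exact bounded_of_tendsto hx
      · rw [h] at hx
        exact hx
    have hyb : ∀ j, |y j| ≤ 1 := by
      intro j
      obtain ⟨C, hC⟩ := hybdd
      have hb : BddAbove (Set.range fun i => |fracDeltaSeq α x i|) := by
        refine ⟨C, ?_⟩
        rintro t ⟨i, rfl⟩
        exact hC i
      exact le_trans (le_ciSup hb j) hxn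
    rcases hX with hXc | hXl
    · -- c₀ case
      have hy0 : Tendsto y atTop (𝓝 0) := by rw [hXc] at hx; exact hx
      set yc : C₀(ℕ, ℝ) := mkC0 y hy0 with hyc
      have hxeq : x = fracDeltaSeq (-α) ⇑yc := funext hxy
      have h1 : matMul a x n = G n yc := by rw [hxeq]; exact hmat0 yc n
      rw [h1]
      calc |G n yc| ≤ ‖G n‖ * ‖yc‖ := (G n).le_opNorm yc
      _ ≤ (∑' j, |Ahat n j|) * 1 := by
          apply mul_le_mul (tsumCLM_norm_le _ _) (c0_norm_le _ _ zero_le_one hyb)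
            (norm_nonneg _) (tsum_nonneg fun _ => abs_nonneg _)
      _ = ∑' j, |Ahat n j| := mul_one _
    · -- ℓ∞ case, via the Schur-type gliding hump
      have hmemB : ∀ z : ℕ → ℝ, (∀ j, |z j| ≤ 1) → fracDeltaSeq (-α) z ∈ X := by
        intro z hz
        rw [hXl]
        refine ⟨1, fun i => ?_⟩
        rw [hinv1 z i]
        exact hz i
      have hschur : Tendsto (fun m => ∑ j ∈ range m, |hatPart α a n m j - Ahat n j|)
          atTop (𝓝 0) := by
        apply schur_glide
        · intro j
          have := (hhat n j).sub (tendsto_const_nhds (x := Ahat n j))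
          simpa using this
        · intro z hz
          obtain ⟨L1, hL1⟩ := hrows _ (hmemB z hz) n
          unfold SeriesHasSum at hL1
          have habel : ∀ m, ∑ k ∈ range m, a n k * fracDeltaSeq (-α) z k
              = ∑ j ∈ range m, hatPart α a n m j * z j := fun m => abel_identity α a z n m
          rw [tendsto_congr habel] at hL1
          have hsz : Summable fun j => Ahat n j * z j := by
            apply Summable.of_abs
            apply Summable.of_nonneg_of_le (fun j => abs_nonneg _) _ (hsummable n)
            intro j
            rw [abs_mul]
            calc |Ahat n j| * |z j| ≤ |Ahat n j| * 1 :=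
                  mul_le_mul_of_nonneg_left (hz j) (abs_nonneg _)
            _ = |Ahat n j| := mul_one _
          have hL2 : Tendsto (fun m => ∑ j ∈ range m, Ahat n j * z j) atTop
              (𝓝 (∑' j, Ahat n j * z j)) := hsz.hasSum.tendsto_sum_nat
          refine ⟨L1 - ∑' j, Ahat n j * z j, ?_⟩
          have h3 := hL1.sub hL2
          have h4 : ∀ m, (∑ j ∈ range m, hatPart α a n m j * z j)
              - ∑ j ∈ range m, Ahat n j * z j
              = ∑ j ∈ range m, (hatPart α a n m j - Ahat n j) * z j := by
            intro m
            rw [← Finset.sum_sub_distrib]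
            apply Finset.sum_congr rfl
            intro j _
            ring
          rwa [tendsto_congr h4] at h3
      -- identify matMul a x n
      obtain ⟨L, hL⟩ := hrows x hx n
      unfold SeriesHasSum at hL
      have hmm : matMul a x n = L := hL.limUnder_eq
      have hsy : Summable fun j => Ahat n j * y j := by
        apply Summable.of_abs
        apply Summable.of_nonneg_of_le (fun j => abs_nonneg _) _ (hsummable n)
        intro j
        rw [abs_mul]
        calc |Ahat n j| * |y j| ≤ |Ahat n j| * 1 :=
              mul_le_mul_of_nonneg_left (hyb j) (abs_nonneg _)
        _ = |Ahat n j| := mul_one _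
      have heq : ∀ m, ∑ k ∈ range m, a n k * x k
          = ∑ j ∈ range m, Ahat n j * y j
            + ∑ j ∈ range m, (hatPart α a n m j - Ahat n j) * y j := by
        intro m
        have e1 : ∑ k ∈ range m, a n k * x k
            = ∑ k ∈ range m, a n k * fracDeltaSeq (-α) y k := by
          apply Finset.sum_congr rfl
          intro k _
          rw [hxy k]
        rw [e1, abel_identity α a y n m, ← Finset.sum_add_distrib]
        apply Finset.sum_congr rfl
        intro j _
        ring
      have h2 : Tendsto (fun m => ∑ j ∈ range m, (hatPart α a n m j - Ahat n j) * y j)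
          atTop (𝓝 0) := by
        apply squeeze_zero_norm _ hschur
        intro m
        rw [Real.norm_eq_abs]
        refine le_trans (Finset.abs_sum_le_sum_abs _ _) (Finset.sum_le_sum ?_)
        intro j _
        rw [abs_mul]
        calc |hatPart α a n m j - Ahat n j| * |y j|
            ≤ |hatPart α a n m j - Ahat n j| * 1 :=
              mul_le_mul_of_nonneg_left (hyb j) (abs_nonneg _)
        _ = |hatPart α a n m j - Ahat n j| := mul_one _
      have hT : Tendsto (fun m => ∑ k ∈ range m, a n k * x k) atTop
          (𝓝 (∑' j, Ahat n j * y j)) := by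
        rw [tendsto_congr heq]
        have := (hsy.hasSum.tendsto_sum_nat).add h2
        simpa using this
      have hLeq : L = ∑' j, Ahat n j * y j := tendsto_nhds_unique hL hT
      rw [hmm, hLeq]
      have habs : Summable fun j => |Ahat n j * y j| := by
        apply Summable.of_nonneg_of_le (fun j => abs_nonneg _) _ (hsummable n)
        intro j
        rw [abs_mul]
        calc |Ahat n j| * |y j| ≤ |Ahat n j| * 1 :=
              mul_le_mul_of_nonneg_left (hyb j) (abs_nonneg _)
        _ = |Ahat n j| := mul_one _
      have h5 : |∑' j, Ahat n j * y j| ≤ ∑' j, |Ahat n j * y j| := by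
        have h2 : Summable fun j => ‖Ahat n j * y j‖ := habs
        have h3 := norm_tsum_le_tsum_norm h2
        exact h3
      refine le_trans h5 ?_
      apply Summable.tsum_le_tsum _ habs (hsummable n)
      intro j
      rw [abs_mul]
      calc |Ahat n j| * |y j| ≤ |Ahat n j| * 1 :=
            mul_le_mul_of_nonneg_left (hyb j) (abs_nonneg _)
      _ = |Ahat n j| := mul_one _
  -- final computation
  set Tset := {t : ℝ | ∃ x ∈ X, deltaNorm α x ≤ 1 ∧ t = ⨆ n, |matMul a x n|} with hTset
  have hub : ∀ t ∈ Tset, t ≤ S := by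
    rintro t ⟨x, hx, hxn, rfl⟩
    apply ciSup_le
    intro n
    exact le_trans (hupper x hx hxn n) (hSub n)
  apply le_antisymm
  · exact Real.sSup_le hub hS0
  · apply ciSup_le
    intro n
    apply Summable.tsum_le_of_sum_range_le (hsummable n)
    intro M
    set z := sgnv (Ahat n) M with hz
    have hz0 : Tendsto z atTop (𝓝 0) := sgnv_tendsto _ _
    set x := fracDeltaSeq (-α) z with hx
    have hxX : x ∈ X := hmem0 z hz0
    have hzb : ∀ j, |z j| ≤ 1 := by
      intro j
      rw [hz]
      unfold sgnv
      split
      · exact sgnf_abs_le_one _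
      · simp
    have hdn : deltaNorm α x ≤ 1 := by
      unfold deltaNorm
      apply ciSup_le
      intro i
      rw [hx, hinv1 z i]
      exact hzb i
    have hcoe : ⇑(sgnC0 (Ahat n) M) = z := rfl
    have hval : matMul a x n = ∑ j ∈ range M, |Ahat n j| := by
      have h1 : matMul a x n = G n (sgnC0 (Ahat n) M) := by
        rw [hx, ← hcoe]
        exact hmat0 _ n
      rw [h1]
      exact tsumCLM_sgn (Ahat n) (hsummable n) M
    have hbound : ∀ i, |matMul a x i| ≤ S := fun i => le_trans (hupper x hxX hdn i) (hSub i)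
    have hmemT : (⨆ i, |matMul a x i|) ∈ Tset := ⟨x, hxX, hdn, rfl⟩
    have hge : ∑ j ∈ range M, |Ahat n j| ≤ ⨆ i, |matMul a x i| := by
      rw [← hval]
      have hbdd2 : BddAbove (Set.range fun i => |matMul a x i|) := by
        refine ⟨S, ?_⟩
        rintro t ⟨i, rfl⟩
        exact hbound i
      exact le_trans (le_abs_self _) (le_ciSup hbdd2 n)
    exact le_trans hge (le_csSup ⟨S, hub⟩ hmemT)
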